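/- Fix K ∈ ℕ, positive constants T, a, s, B, and for each k = 1,…,K positive constants A_k, f_k, c_k. Define φ_k(η) = (1−η)·T/a + (A_k/f_k)·log₂ η, v_k(η) = s/φ_k(η) where φ_k(η) > 0, and let u_k : (0, c_k/ln 2) → (0,∞) be the inverse function of b ↦ b·log₂(1 + c_k/b). Let D = {η ∈ (0,1) : for all k, φ_k(η) > 0 and v_k(η) < c_k/ln 2}, and define g : D → ℝ by g(η) = ∑_{k=1}^K u_k(v_k(η)). Let F(T) be the set of all (t, b, η) ∈ ℝ^K × ℝ^K × ℝ satisfying: (a) t_k ≤ φ_k(η) for all k; (b) t_k·b_k·log₂(1 + c_k/b_k) ≥ s for all k; (c) ∑_{k=1}^K b_k ≤ B; (d) 0 < η < 1; (e) t_k > 0 and b_k > 0 for all k. Suppose η* ∈ D is a point at which g is differentiable with derivative 0 (i.e. ∑_{k=1}^K u_k′(v_k(η*))·v_k′(η*) = 0). Then g(η*) = min_{η ∈ D} g(η), and F(T) is nonempty if and only if B ≥ g(η*). -/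

import Mathlib

/-!
The minimal bandwidth `u_k` is a left inverse of the rate `b ↦ b log₂(1 + c_k/b)`, which is
increasing and concave on `(0, ∞)` with range `(0, c_k / ln 2)`; hence `u_k` is increasing and
convex there. Since `φ_k` is concave, `v_k = s / φ_k` is convex, so each `u_k ∘ v_k`, and thus `g`,
is convex on the convex set `D`, and its stationary point `η*` is a global minimiser.
Feasibility reduces to `g`: a feasible `(t, b, η)` has `v_k(η) ≤ rate(b_k)`, so `η ∈ D` and
`g(η) ≤ ∑ b_k ≤ B`; conversely `t_k = φ_k(η)`, `b_k = u_k(v_k(η))` is feasible for every `η ∈ D`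
with `g(η) ≤ B`.
-/

open scoped BigOperators

/-- Maximal transmission time allowed at accuracy `η`: `φ(η) = (1-η)T/a + (A/f)·log₂ η`. -/
noncomputable def phi (T a A f η : ℝ) : ℝ := (1 - η) * T / a + A / f * Real.logb 2 η

/-- Feasibility of `(t, b, η)` for the reduced delay-minimization constraints (12a)–(12e). -/
def RedFeasible (K : ℕ) (T a s B : ℝ) (A f c : Fin K → ℝ)
    (t b : Fin K → ℝ) (η : ℝ) : Prop :=
  (∀ k, t k ≤ phi T a (A k) (f k) η) ∧
  (∀ k, s ≤ t k * (b k * Real.logb 2 (1 + c k / b k))) ∧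
  (∑ k, b k ≤ B) ∧
  (0 < η ∧ η < 1) ∧
  (∀ k, 0 < t k) ∧
  (∀ k, 0 < b k)

open Set Filter Topology Real

section Convexity

variable {𝕜 E α β : Type*} [Semiring 𝕜] [PartialOrder 𝕜] [AddCommMonoid E] [AddCommMonoid α]
  [PartialOrder α] [AddCommMonoid β] [PartialOrder β] [SMul 𝕜 E] [SMul 𝕜 α] [SMul 𝕜 β]
  {s : Set E} {t : Set β} {f : E → β} {g : β → α}

/-- Unlike `ConvexOn.comp`, this does not need `f '' s` to be convex. -/
theorem ConvexOn.comp_of_mapsTo (hg : ConvexOn 𝕜 t g) (hg' : MonotoneOn g t)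
    (hf : ConvexOn 𝕜 s f) (hst : MapsTo f s t) : ConvexOn 𝕜 s (g ∘ f) :=
  ⟨hf.1, fun _ hx _ hy _ _ ha hb hab =>
    (hg' (hst (hf.1 hx hy ha hb hab)) (hg.1 (hst hx) (hst hy) ha hb hab)
      (hf.2 hx hy ha hb hab)).trans (hg.2 (hst hx) (hst hy) ha hb hab)⟩

theorem ConvexOn.comp_concaveOn_of_mapsTo (hg : ConvexOn 𝕜 t g) (hg' : AntitoneOn g t)
    (hf : ConcaveOn 𝕜 s f) (hst : MapsTo f s t) : ConvexOn 𝕜 s (g ∘ f) :=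
  ⟨hf.1, fun _ hx _ hy _ _ ha hb hab =>
    (hg' (hg.1 (hst hx) (hst hy) ha hb hab) (hst (hf.1 hx hy ha hb hab))
      (hf.2 hx hy ha hb hab)).trans (hg.2 (hst hx) (hst hy) ha hb hab)⟩

end Convexity

theorem ConvexOn.sum {𝕜 E β ι : Type*} [Semiring 𝕜] [PartialOrder 𝕜] [AddCommMonoid E]
    [AddCommMonoid β] [PartialOrder β] [IsOrderedAddMonoid β] [SMul 𝕜 E] [Module 𝕜 β]
    {s : Set E} {t : Finset ι} {F : ι → E → β} (hs : Convex 𝕜 s)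
    (hF : ∀ i ∈ t, ConvexOn 𝕜 s (F i)) : ConvexOn 𝕜 s (fun x => ∑ i ∈ t, F i x) := by
  convert Finset.sum_induction F (ConvexOn 𝕜 s) (fun _ _ => ConvexOn.add)
    (convexOn_const (0 : β) hs) hF using 1
  exact funext fun x => (Finset.sum_apply x t F).symm

theorem MonotoneOn.monotoneOn_of_leftInvOn {α β : Type*} [LinearOrder α] [PartialOrder β]
    {R : α → β} {u : β → α} {S : Set α} (hR : MonotoneOn R S) (hu : LeftInvOn u R S) :
    MonotoneOn u (R '' S) := by
  rintro _ ⟨p, hp, rfl⟩ _ ⟨q, hq, rfl⟩ hpq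
  rcases le_total p q with h | h
  · rwa [hu hp, hu hq]
  · rw [le_antisymm hpq (hR hq hp h)]

theorem ConcaveOn.convexOn_of_leftInvOn {𝕜 E β : Type*} [Semiring 𝕜] [PartialOrder 𝕜]
    [AddCommMonoid E] [LinearOrder E] [AddCommMonoid β] [PartialOrder β] [SMul 𝕜 E] [SMul 𝕜 β]
    {S : Set E} {R : E → β} {u : β → E} (hR : ConcaveOn 𝕜 S R) (hR' : MonotoneOn R S)
    (hu : LeftInvOn u R S) (hRS : Convex 𝕜 (R '' S)) : ConvexOn 𝕜 (R '' S) u := by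
  refine ⟨hRS, ?_⟩
  rintro _ ⟨p, hp, rfl⟩ _ ⟨q, hq, rfl⟩ a b ha hb hab
  have hmem : a • p + b • q ∈ S := hR.1 hp hq ha hb hab
  calc u (a • R p + b • R q) ≤ u (R (a • p + b • q)) :=
        hR'.monotoneOn_of_leftInvOn hu
          (hRS (mem_image_of_mem R hp) (mem_image_of_mem R hq) ha hb hab)
          (mem_image_of_mem R hmem) (hR.2 hp hq ha hb hab)
    _ = a • u (R p) + b • u (R q) := by rw [hu hmem, hu hp, hu hq]

theorem ConvexOn.isMinOn_of_hasDerivAt_zero {S : Set ℝ} {g : ℝ → ℝ} {x : ℝ}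
    (hg : ConvexOn ℝ S g) (hx : x ∈ S) (hd : HasDerivAt g 0 x) : IsMinOn g S x := by
  rw [isMinOn_iff]
  intro y hy
  rcases lt_trichotomy x y with h | rfl | h
  · have := hg.le_slope_of_hasDerivAt hx hy h hd
    rw [slope_def_field, le_div_iff₀ (sub_pos.2 h)] at this
    simpa using this
  · exact le_rfl
  · have := hg.slope_le_of_hasDerivAt hy hx h hd
    rw [slope_def_field, div_le_iff₀ (sub_pos.2 h)] at this
    simpa using this

theorem hasDerivAt_one_add_div (c : ℝ) {b : ℝ} (hb : b ≠ 0) :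
    HasDerivAt (fun x => 1 + c / x) (-c / b ^ 2) b := by
  simpa [div_eq_mul_inv, neg_div] using ((hasDerivAt_inv hb).const_mul c).const_add 1

/-- The rate of a user with bandwidth `b`; in the paper `c = g_k p_k^max / N₀`. -/
noncomputable def shannonRate (c b : ℝ) : ℝ := b * logb 2 (1 + c / b)

section ShannonRate

variable {c : ℝ}

theorem shannonRate_eq (c b : ℝ) : shannonRate c b = b * log (1 + c / b) / log 2 :=
  (mul_div_assoc _ _ _).symm

theorem hasDerivAt_shannonRate (hc : 0 < c) {b : ℝ} (hb : 0 < b) :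
    HasDerivAt (shannonRate c) ((log (1 + c / b) - c / (b + c)) / log 2) b := by
  rw [show shannonRate c = _ from funext (shannonRate_eq c)]
  refine (((hasDerivAt_id' b).mul ((hasDerivAt_one_add_div c hb.ne').log (by positivity))).div_const
    (log 2)).congr_deriv ?_
  have : b + c ≠ 0 := by positivity
  field_simp
  ring

theorem continuousOn_shannonRate (hc : 0 < c) : ContinuousOn (shannonRate c) (Ioi 0) :=
  fun _ hb => (hasDerivAt_shannonRate hc hb).continuousAt.continuousWithinAt

theorem monotoneOn_shannonRate (hc : 0 < c) : MonotoneOn (shannonRate c) (Ioi 0) := by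
  refine monotoneOn_of_deriv_nonneg (convex_Ioi 0) (continuousOn_shannonRate hc) ?_ ?_ <;>
    rw [interior_Ioi] <;> intro b (hb : 0 < b)
  · exact (hasDerivAt_shannonRate hc hb).differentiableAt.differentiableWithinAt
  · rw [(hasDerivAt_shannonRate hc hb).deriv]
    have h := one_sub_inv_le_log_of_pos (x := 1 + c / b) (by positivity)
    have he : 1 - (1 + c / b)⁻¹ = c / (b + c) := by field_simp; ring
    exact div_nonneg (by linarith) (log_nonneg one_le_two)

theorem concaveOn_shannonRate (hc : 0 < c) : ConcaveOn ℝ (Ioi 0) (shannonRate c) := by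
  refine concaveOn_of_hasDerivWithinAt2_nonpos (convex_Ioi 0) (continuousOn_shannonRate hc)
    (f' := fun b => (log (1 + c / b) - c / (b + c)) / log 2)
    (f'' := fun b => -(c ^ 2 / (b * (b + c) ^ 2)) / log 2) ?_ ?_ ?_ <;>
    rw [interior_Ioi] <;> intro b (hb : 0 < b)
  · exact (hasDerivAt_shannonRate hc hb).hasDerivWithinAt
  · have h := hasDerivAt_one_add_div c hb.ne'
    have h' : HasDerivAt (fun x => c / (x + c)) (-c / (b + c) ^ 2) b := by
      simpa [div_eq_mul_inv, neg_div] using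
        (((hasDerivAt_id b).add_const c).inv (by positivity)).const_mul c
    refine (((h.log (by positivity)).sub h').div_const (log 2)).hasDerivWithinAt.congr_deriv ?_
    have : b + c ≠ 0 := by positivity
    field_simp
    ring
  · exact div_nonpos_of_nonpos_of_nonneg (neg_nonpos.2 (by positivity)) (log_nonneg one_le_two)

theorem shannonRate_pos (hc : 0 < c) {b : ℝ} (hb : 0 < b) : 0 < shannonRate c b := by
  rw [shannonRate_eq]
  have : 1 < 1 + c / b := lt_add_of_pos_right 1 (by positivity)
  exact div_pos (mul_pos hb (log_pos this)) (log_pos one_lt_two)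

theorem shannonRate_lt (hc : 0 < c) {b : ℝ} (hb : 0 < b) : shannonRate c b < c / log 2 := by
  rw [shannonRate_eq]
  have h := log_lt_sub_one_of_pos (x := 1 + c / b) (by positivity)
    (lt_add_of_pos_right 1 (by positivity)).ne'
  refine div_lt_div_of_pos_right ?_ (log_pos one_lt_two)
  calc b * log (1 + c / b) < b * (c / b) := by gcongr; linarith
    _ = c := by field_simp

theorem tendsto_shannonRate_atTop (c : ℝ) : Tendsto (shannonRate c) atTop (𝓝 (c / log 2)) := by
  simpa only [← shannonRate_eq] using (tendsto_mul_log_one_add_div_atTop c).div_const (log 2)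

theorem tendsto_shannonRate_nhdsGT_zero (hc : 0 < c) :
    Tendsto (shannonRate c) (𝓝[>] 0) (𝓝 0) := by
  -- for `b > 0` the rate is `(b log (b + c) - b log b) / log 2`, which is continuous at `0`
  have hcont : ContinuousAt (fun b => (b * log (b + c) - b * log b) / log 2) 0 :=
    ((continuousAt_id.mul ((continuousAt_id.add continuousAt_const).log (by simp [hc.ne'])))
      |>.sub continuous_mul_log.continuousAt).div_const _
  have h := hcont.tendsto.mono_left (nhdsWithin_le_nhds (s := Ioi 0))
  simp only [zero_mul, sub_self, zero_div] at h
  refine h.congr' (eventually_nhdsWithin_of_forall fun b (hb : 0 < b) => ?_)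
  rw [shannonRate_eq, one_add_div hb.ne', log_div (by positivity) hb.ne', mul_sub]

theorem image_shannonRate_Ioi (hc : 0 < c) : shannonRate c '' Ioi 0 = Ioo 0 (c / log 2) := by
  refine Subset.antisymm ?_ ?_
  · rintro _ ⟨b, hb, rfl⟩
    exact ⟨shannonRate_pos hc hb, shannonRate_lt hc hb⟩
  · exact isPreconnected_Ioi.intermediate_value_Ioo (le_principal_iff.2 self_mem_nhdsWithin)
      (le_principal_iff.2 (Ioi_mem_atTop 0)) (continuousOn_shannonRate hc)
      (tendsto_shannonRate_nhdsGT_zero hc) (tendsto_shannonRate_atTop c)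

end ShannonRate

theorem concaveOn_phi (T a : ℝ) {A f : ℝ} (hAf : 0 ≤ A / f) :
    ConcaveOn ℝ (Ioi 0) (phi T a A f) := by
  refine ⟨convex_Ioi 0, fun x hx y hy α β hα hβ hαβ => ?_⟩
  have hlog := strictConcaveOn_log_Ioi.concaveOn.2 hx hy hα hβ hαβ
  simp only [smul_eq_mul, phi, logb] at hlog ⊢
  linear_combination (A / f / log 2) * hlog + (T / a) * hαβ

section MinimalBandwidth

variable {c : ℝ} {u : ℝ → ℝ}

theorem monotoneOn_of_leftInvOn_shannonRate (hc : 0 < c)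
    (hu : LeftInvOn u (shannonRate c) (Ioi 0)) : MonotoneOn u (Ioo 0 (c / log 2)) :=
  image_shannonRate_Ioi hc ▸ (monotoneOn_shannonRate hc).monotoneOn_of_leftInvOn hu

theorem convexOn_of_leftInvOn_shannonRate (hc : 0 < c)
    (hu : LeftInvOn u (shannonRate c) (Ioi 0)) : ConvexOn ℝ (Ioo 0 (c / log 2)) u :=
  image_shannonRate_Ioi hc ▸ (concaveOn_shannonRate hc).convexOn_of_leftInvOn
    (monotoneOn_shannonRate hc) hu (image_shannonRate_Ioi hc ▸ convex_Ioo _ _)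

theorem convexOn_comp_div_of_leftInvOn_shannonRate {I : Set ℝ} {φ : ℝ → ℝ} {s : ℝ}
    (hφ : ConcaveOn ℝ I φ) (hs : 0 < s) (hc : 0 < c)
    (hu : LeftInvOn u (shannonRate c) (Ioi 0)) :
    ConvexOn ℝ {η ∈ {η ∈ I | 0 < φ η} | s / φ η < c / log 2} (fun η => u (s / φ η)) := by
  have hdiv : ConvexOn ℝ (Ioi 0) (fun x : ℝ => s / x) :=
    ((convexOn_zpow (-1)).smul hs.le).congr fun x _ => by simp [div_eq_mul_inv]
  have hv : ConvexOn ℝ {η ∈ I | 0 < φ η} (fun η => s / φ η) :=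
    hdiv.comp_concaveOn_of_mapsTo (fun _ hx _ _ hxy => div_le_div_of_nonneg_left hs.le hx hxy)
      (hφ.subset (sep_subset _ _) (hφ.convex_gt 0)) fun _ hη => hη.2
  exact (convexOn_of_leftInvOn_shannonRate hc hu).comp_of_mapsTo
    (monotoneOn_of_leftInvOn_shannonRate hc hu) (hv.subset (sep_subset _ _) (hv.convex_lt _))
    fun _ hη => ⟨div_pos hs hη.1.2, hη.2⟩

theorem le_of_le_mul_shannonRate (hc : 0 < c) (hu : LeftInvOn u (shannonRate c) (Ioi 0))
    {s t p b : ℝ} (hs : 0 < s) (ht : 0 < t) (hb : 0 < b) (htp : t ≤ p)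
    (hrate : s ≤ t * shannonRate c b) : 0 < p ∧ s / p < c / log 2 ∧ u (s / p) ≤ b := by
  have hp : 0 < p := ht.trans_le htp
  have hR := shannonRate_pos hc hb
  have hle : s / p ≤ shannonRate c b := by
    rw [div_le_iff₀ hp, mul_comm]
    exact hrate.trans (mul_le_mul_of_nonneg_right htp hR.le)
  have hlt := hle.trans_lt (shannonRate_lt hc hb)
  refine ⟨hp, hlt, ?_⟩
  calc u (s / p) ≤ u (shannonRate c b) := monotoneOn_of_leftInvOn_shannonRate hc hu
        ⟨div_pos hs hp, hlt⟩ ⟨hR, shannonRate_lt hc hb⟩ hle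
    _ = b := hu hb

end MinimalBandwidth

theorem convexOn_sum_comp_div_of_leftInvOn_shannonRate {ι : Type*} [Fintype ι] {I : Set ℝ}
    {φ u : ι → ℝ → ℝ} {s : ℝ} {c : ι → ℝ} (hI : Convex ℝ I) (hφ : ∀ k, ConcaveOn ℝ I (φ k))
    (hs : 0 < s) (hc : ∀ k, 0 < c k) (hu : ∀ k, LeftInvOn (u k) (shannonRate (c k)) (Ioi 0)) :
    ConvexOn ℝ {η | η ∈ I ∧ ∀ k, 0 < φ k η ∧ s / φ k η < c k / log 2}
      (fun η => ∑ k, u k (s / φ k η)) := by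
  have hterm k := convexOn_comp_div_of_leftInvOn_shannonRate (hφ k) hs (hc k) (hu k)
  have hsub k : {η | η ∈ I ∧ ∀ k, 0 < φ k η ∧ s / φ k η < c k / log 2} ⊆
      {η ∈ {η ∈ I | 0 < φ k η} | s / φ k η < c k / log 2} :=
    fun _ hη => ⟨⟨hη.1, (hη.2 k).1⟩, (hη.2 k).2⟩
  have hD : Convex ℝ {η | η ∈ I ∧ ∀ k, 0 < φ k η ∧ s / φ k η < c k / log 2} :=
    fun _ hx _ hy _ _ ha hb hab => ⟨hI hx.1 hy.1 ha hb hab, fun k =>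
      have h := (hterm k).1 (hsub k hx) (hsub k hy) ha hb hab
      ⟨h.1.2, h.2⟩⟩
  exact ConvexOn.sum hD fun k _ => (hterm k).subset (hsub k) hD

theorem exists_redFeasible_iff {K : ℕ} {T a s B : ℝ} {A f c : Fin K → ℝ}
    {u : Fin K → ℝ → ℝ} (hs : 0 < s) (hc : ∀ k, 0 < c k)
    (hu : ∀ k, LeftInvOn (u k) (shannonRate (c k)) (Ioi 0)) :
    (∃ (t b : Fin K → ℝ) (η : ℝ), RedFeasible K T a s B A f c t b η) ↔
      ∃ η ∈ {η : ℝ | η ∈ Ioo (0 : ℝ) 1 ∧ ∀ k, 0 < phi T a (A k) (f k) η ∧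
        s / phi T a (A k) (f k) η < c k / log 2},
        ∑ k, u k (s / phi T a (A k) (f k) η) ≤ B := by
  constructor
  · rintro ⟨t, b, η, hdeadline, hrate, hbudget, hη, ht, hb⟩
    have key k := le_of_le_mul_shannonRate (hc k) (hu k) hs (ht k) (hb k) (hdeadline k) (hrate k)
    exact ⟨η, ⟨hη, fun k => ⟨(key k).1, (key k).2.1⟩⟩,
      (Finset.sum_le_sum fun k _ => (key k).2.2).trans hbudget⟩
  · rintro ⟨η, ⟨hη, hD⟩, hg⟩
    have hv k : s / phi T a (A k) (f k) η ∈ shannonRate (c k) '' Ioi 0 := by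
      rw [image_shannonRate_Ioi (hc k)]
      exact ⟨div_pos hs (hD k).1, (hD k).2⟩
    choose b hb hbv using hv
    refine ⟨fun k => phi T a (A k) (f k) η, b, η, fun k => le_rfl, fun k => ?_, ?_, hη,
      fun k => (hD k).1, hb⟩
    · change s ≤ _ * shannonRate (c k) (b k)
      rw [hbv k, mul_div_cancel₀ _ (hD k).1.ne']
    · calc ∑ k, b k = ∑ k, u k (s / phi T a (A k) (f k) η) :=
            Finset.sum_congr rfl fun k _ => by rw [← hbv k, hu k (hb k)]
        _ ≤ B := hg

theorem redFeasible_iff_stationary_point_general (K : ℕ) (T a s B : ℝ)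
    (hs : 0 < s)
    (A f c : Fin K → ℝ) (hA : ∀ k, 0 < A k) (hf : ∀ k, 0 < f k) (hc : ∀ k, 0 < c k)
    (u : Fin K → ℝ → ℝ)
    (hu : ∀ k, ∀ b : ℝ, 0 < b → u k (b * Real.logb 2 (1 + c k / b)) = b)
    (ηstar : ℝ)
    (hmem : ηstar ∈ {η : ℝ | η ∈ Set.Ioo (0 : ℝ) 1 ∧
      ∀ k, 0 < phi T a (A k) (f k) η ∧
        s / phi T a (A k) (f k) η < c k / Real.log 2})
    (hstat : HasDerivAt (fun η : ℝ => ∑ k, u k (s / phi T a (A k) (f k) η)) 0 ηstar) :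
    (∀ η ∈ {η : ℝ | η ∈ Set.Ioo (0 : ℝ) 1 ∧
        ∀ k, 0 < phi T a (A k) (f k) η ∧
          s / phi T a (A k) (f k) η < c k / Real.log 2},
      ∑ k, u k (s / phi T a (A k) (f k) ηstar) ≤ ∑ k, u k (s / phi T a (A k) (f k) η)) ∧
    ((∃ (t b : Fin K → ℝ) (η : ℝ), RedFeasible K T a s B A f c t b η) ↔
      ∑ k, u k (s / phi T a (A k) (f k) ηstar) ≤ B) := by
  have hu' k : LeftInvOn (u k) (shannonRate (c k)) (Ioi 0) := fun b hb => hu k b hb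
  have hφ k : ConcaveOn ℝ (Ioo 0 1) (phi T a (A k) (f k)) :=
    (concaveOn_phi T a (div_pos (hA k) (hf k)).le).subset Ioo_subset_Ioi_self (convex_Ioo 0 1)
  have hmin := (convexOn_sum_comp_div_of_leftInvOn_shannonRate (convex_Ioo 0 1) hφ hs hc
    hu').isMinOn_of_hasDerivAt_zero hmem hstat
  refine ⟨isMinOn_iff.1 hmin, (exists_redFeasible_iff hs hc hu').trans ⟨?_, ?_⟩⟩
  · rintro ⟨η, hη, hle⟩
    exact (hmin hη).trans hle
  · exact fun h => ⟨ηstar, hmem, h⟩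

/-- **Theorem 1**: with `u_k` the inverse of the rate function `b ↦ b·log₂(1 + c_k/b)`,
`v_k(η) = s/φ_k(η)`, `D = {η ∈ (0,1) : ∀ k, φ_k(η) > 0 ∧ v_k(η) < c_k/ln 2}` and
`g(η) = ∑_k u_k(v_k(η))`, if `g` is differentiable with derivative `0` at a point `η* ∈ D`,
then `g(η*)` is the minimum of `g` on `D`, and the reduced feasibility set `F(T)` is nonempty
iff `B ≥ g(η*)`. -/
theorem redFeasible_iff_stationary_point (K : ℕ) (T a s B : ℝ)
    (hT : 0 < T) (ha : 0 < a) (hs : 0 < s) (hB : 0 < B)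
    (A f c : Fin K → ℝ) (hA : ∀ k, 0 < A k) (hf : ∀ k, 0 < f k) (hc : ∀ k, 0 < c k)
    (u : Fin K → ℝ → ℝ)
    (hu : ∀ k, ∀ b : ℝ, 0 < b → u k (b * Real.logb 2 (1 + c k / b)) = b)
    (ηstar : ℝ)
    (hmem : ηstar ∈ {η : ℝ | η ∈ Set.Ioo (0 : ℝ) 1 ∧
      ∀ k, 0 < phi T a (A k) (f k) η ∧
        s / phi T a (A k) (f k) η < c k / Real.log 2})
    (hstat : HasDerivAt (fun η : ℝ => ∑ k, u k (s / phi T a (A k) (f k) η)) 0 ηstar) :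
    (∀ η ∈ {η : ℝ | η ∈ Set.Ioo (0 : ℝ) 1 ∧
        ∀ k, 0 < phi T a (A k) (f k) η ∧
          s / phi T a (A k) (f k) η < c k / Real.log 2},
      ∑ k, u k (s / phi T a (A k) (f k) ηstar) ≤ ∑ k, u k (s / phi T a (A k) (f k) η)) ∧
    ((∃ (t b : Fin K → ℝ) (η : ℝ), RedFeasible K T a s B A f c t b η) ↔
      ∑ k, u k (s / phi T a (A k) (f k) ηstar) ≤ B) :=
  redFeasible_iff_stationary_point_general K T a s B hs A f c hA hf hc u hu ηstar hmem hstat
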